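/- arXiv:1612.03162 — 6 statements merged into one kernel-verified Lean document; each statement's English description precedes it below -/
import Mathlib

section
/- Let Σ be a nontrivial commutative ring and m a positive integer that is invertible in Σ. The Σ-algebra homomorphism Σ[X]/(X^m − 1) → ∏_{d ∣ m} Σ[X]/(Φ_d(X)) induced by the quotient maps Σ[X]/(X^m − 1) → Σ[X]/(Φ_d(X)) (well defined since Φ_d divides X^m − 1 for each divisor d of m) is an isomorphism of Σ-algebras. -/
/-! Since `m` is invertible, `X^m − 1` is separable, so its factors `Φ_d`, `d ∣ m`, are pairwise
coprime; the isomorphism is then the Chinese remainder theorem for the ideals `(Φ_d)`, whose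
intersection is `(∏ Φ_d) = (X^m − 1)`. -/

open Polynomial

/-- The canonical map `Σ[X]/(X^m − 1) → Σ[X]/(Φ_d(X))` for a divisor `d` of `m`,
well defined since `Φ_d(X)` divides `X^m − 1`. -/
noncomputable def cycQuotFactor (S : Type*) [CommRing S] (m : ℕ) (hm : 0 < m)
    (d : m.divisors) :
    (S[X] ⧸ Ideal.span {(X : S[X]) ^ m - 1}) →+*
      S[X] ⧸ Ideal.span {cyclotomic (d : ℕ) S} :=
  Ideal.Quotient.factor (Ideal.span_singleton_le_span_singleton.mpr (by
    rw [← prod_cyclotomic_eq_X_pow_sub_one hm S]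
    exact Finset.dvd_prod_of_mem _ d.2))

open Function in
theorem Ideal.bijective_pi_quotient_factor {R ι : Type*} [CommRing R] [Finite ι]
    {I : Ideal R} {J : ι → Ideal R} (hJ : Pairwise (IsCoprime on J)) (hIJ : I = ⨅ i, J i)
    (hle : ∀ i, I ≤ J i) :
    Bijective (RingHom.pi fun i => Ideal.Quotient.factor (hle i)) := by
  subst hIJ
  have hcrt : RingHom.pi (fun i => Ideal.Quotient.factor (hle i)) =
      Ideal.quotientInfToPiQuotient J :=
    Ideal.Quotient.ringHom_ext (RingHom.ext fun _ => rfl)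
  rw [hcrt]
  exact ⟨Ideal.quotientInfToPiQuotient_inj J, Ideal.quotientInfToPiQuotient_surj hJ⟩

theorem Polynomial.isCoprime_cyclotomic_of_isUnit {R : Type*} [CommRing R] {m d e : ℕ}
    (hm : 0 < m) (hu : IsUnit (m : R)) (hd : d ∣ m) (he : e ∣ m) (hde : d ≠ e) :
    IsCoprime (cyclotomic d R) (cyclotomic e R) := by
  classical
  have hsep : ((X : R[X]) ^ m - 1).Separable := by
    simpa using separable_X_pow_sub_C_unit (1 : Rˣ) hu
  have hdvd : cyclotomic d R * cyclotomic e R ∣ X ^ m - 1 := by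
    rw [← Finset.prod_pair (f := fun n => cyclotomic n R) hde,
      ← prod_cyclotomic_eq_X_pow_sub_one hm R]
    refine Finset.prod_dvd_prod_of_subset _ _ _ fun n hn => ?_
    rcases Finset.mem_insert.mp hn with rfl | hn
    · exact Nat.mem_divisors.mpr ⟨hd, hm.ne'⟩
    · rw [Finset.mem_singleton.mp hn]
      exact Nat.mem_divisors.mpr ⟨he, hm.ne'⟩
  exact (hsep.of_dvd hdvd).isCoprime

theorem Polynomial.pairwise_isCoprime_cyclotomic_divisors {R : Type*} [CommRing R] {m : ℕ}
    (hm : 0 < m) (hu : IsUnit (m : R)) :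
    Pairwise fun d e : m.divisors => IsCoprime (cyclotomic (d : ℕ) R) (cyclotomic (e : ℕ) R) :=
  fun d e hde => isCoprime_cyclotomic_of_isUnit hm hu (Nat.dvd_of_mem_divisors d.2)
    (Nat.dvd_of_mem_divisors e.2) (Subtype.coe_injective.ne hde)

theorem Polynomial.span_X_pow_sub_one_eq_iInf_span_cyclotomic {R : Type*} [CommRing R] {m : ℕ}
    (hm : 0 < m) (hu : IsUnit (m : R)) :
    Ideal.span {(X : R[X]) ^ m - 1} = ⨅ d : m.divisors, Ideal.span {cyclotomic (d : ℕ) R} := by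
  rw [Ideal.iInf_span_singleton fun _ _ hde => pairwise_isCoprime_cyclotomic_divisors hm hu hde,
    Finset.prod_coe_sort m.divisors (fun d => cyclotomic d R),
    prod_cyclotomic_eq_X_pow_sub_one hm R]

theorem cyclotomic_decomposition_of_isUnit_general (S : Type*) [CommRing S]
    (m : ℕ) (hm : 0 < m) (hu : IsUnit (m : S)) :
    Function.Bijective (Pi.ringHom (cycQuotFactor S m hm)) ∧
      ∀ s : S,
        Pi.ringHom (cycQuotFactor S m hm)
            (algebraMap S (S[X] ⧸ Ideal.span {(X : S[X]) ^ m - 1}) s) =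
          algebraMap S (∀ d : m.divisors, S[X] ⧸ Ideal.span {cyclotomic (d : ℕ) S}) s := by
  have hcoprime : Pairwise fun d e : m.divisors =>
      IsCoprime (Ideal.span {cyclotomic (d : ℕ) S}) (Ideal.span {cyclotomic (e : ℕ) S}) :=
    fun _ _ hde => (Ideal.isCoprime_span_singleton_iff _ _).mpr <|
      pairwise_isCoprime_cyclotomic_divisors hm hu hde
  exact ⟨Ideal.bijective_pi_quotient_factor hcoprime
    (span_X_pow_sub_one_eq_iInf_span_cyclotomic hm hu) _, fun _ => rfl⟩

/-- If `m` is invertible in a nontrivial commutative ring `Σ`, the canonical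
homomorphism `Σ[X]/(X^m − 1) → ∏_{d ∣ m} Σ[X]/(Φ_d(X))` is an isomorphism of
`Σ`-algebras (it is bijective and commutes with the structure maps from `Σ`). -/
theorem cyclotomic_decomposition_of_isUnit (S : Type*) [CommRing S] [Nontrivial S]
    (m : ℕ) (hm : 0 < m) (hu : IsUnit (m : S)) :
    Function.Bijective (Pi.ringHom (cycQuotFactor S m hm)) ∧
      ∀ s : S,
        Pi.ringHom (cycQuotFactor S m hm)
            (algebraMap S (S[X] ⧸ Ideal.span {(X : S[X]) ^ m - 1}) s) =
          algebraMap S (∀ d : m.divisors, S[X] ⧸ Ideal.span {cyclotomic (d : ℕ) S}) s :=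
  cyclotomic_decomposition_of_isUnit_general S m hm hu
end

section
/- Let Σ be a commutative ring and m a positive integer that is invertible in Σ. For any two distinct positive divisors d ≠ e of m, the cyclotomic polynomials Φ_d(X) and Φ_e(X) are coprime in Σ[X], i.e., they generate the unit ideal of Σ[X]. -/
open Polynomial

theorem separable_X_pow_sub_one_of_isUnit (S : Type*) [CommRing S] (m : ℕ) (hm : 0 < m)
    (hu : IsUnit (m : S)) : (X ^ m - 1 : S[X]).Separable := by
  obtain ⟨u, hu⟩ := hu
  refine ⟨-1, C (↑u⁻¹ : S) * X, ?_⟩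
  have hder : derivative (X ^ m - 1 : S[X]) = C (m : S) * X ^ (m - 1) := by
    simp [derivative_X_pow]
  rw [hder]
  have h1 : (C (↑u⁻¹ : S) * X) * (C (m : S) * X ^ (m - 1)) = X ^ m := by
    have : (↑u⁻¹ : S) * (m : S) = 1 := by
      rw [← hu]; exact u.inv_mul
    calc (C (↑u⁻¹ : S) * X) * (C (m : S) * X ^ (m - 1))
        = C ((↑u⁻¹ : S) * (m : S)) * (X * X ^ (m - 1)) := by rw [C_mul]; ring
      _ = X ^ m := by rw [this, map_one, one_mul, ← pow_succ', Nat.sub_add_cancel hm]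
  rw [h1]; ring

/-- If `m` is a positive integer invertible in a commutative ring `Σ`, then for any two
distinct positive divisors `d ≠ e` of `m`, the cyclotomic polynomials `Φ_d(X)` and
`Φ_e(X)` are coprime in `Σ[X]`, i.e. they generate the unit ideal of `Σ[X]`. -/
theorem cyclotomic_isCoprime_of_isUnit (S : Type*) [CommRing S] (m : ℕ) (hm : 0 < m)
    (hu : IsUnit (m : S)) (d e : ℕ) (hd : d ∣ m) (he : e ∣ m) (hde : d ≠ e) :
    IsCoprime (cyclotomic d S) (cyclotomic e S) ∧
      Ideal.span {cyclotomic d S, cyclotomic e S} = (⊤ : Ideal S[X]) := by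
  have hsep : (X ^ m - 1 : S[X]).Separable := separable_X_pow_sub_one_of_isUnit S m hm hu
  have hdvd : cyclotomic d S * cyclotomic e S ∣ X ^ m - 1 := by
    rw [← prod_cyclotomic_eq_X_pow_sub_one hm S,
      ← Finset.prod_pair (f := fun i => cyclotomic i S) hde]
    exact Finset.prod_dvd_prod_of_subset _ _ _ (by
      intro x hx
      simp only [Finset.mem_insert, Finset.mem_singleton] at hx
      rcases hx with rfl | rfl <;> simp [Nat.mem_divisors, hd, he, hm.ne'])
  have hcop : IsCoprime (cyclotomic d S) (cyclotomic e S) :=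
    (hsep.of_dvd hdvd).isCoprime
  refine ⟨hcop, ?_⟩
  obtain ⟨a, b, hab⟩ := hcop
  rw [Ideal.eq_top_iff_one, ← hab]
  exact add_mem (Ideal.mul_mem_left _ _ (Ideal.subset_span (by simp)))
    (Ideal.mul_mem_left _ _ (Ideal.subset_span (by simp)))
end

section
/- For every positive divisor d of m, let π_d : Σ[ρ] → Σ[X]/(Φ_d(X)) be the Σ-algebra homomorphism determined by sending the chosen generator t of ρ to the class of X (well defined since X^m − 1 maps to 0 in Σ[X]/(Φ_d(X))). Then π_m(e_prim) = 1, while π_d(e_prim) = 0 for every proper divisor d of m. -/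
/-!
Since `t` generates `ρ`, an algebra map out of `Σ[ρ]` may send `t` to any unit `x` with
`x ^ m = 1`, and is determined by that value; the class of `X` modulo `Φ_d` is such a unit.
Under an algebra map sending `t` to `x`, the averaging idempotent of `⟨t ^ (m / p)⟩` becomes
`p⁻¹ ∑_{j < p} x ^ ((m / p) j)`, so `e_prim` becomes `∏_p (1 - p⁻¹ ∑_{j < p} x ^ ((m / p) j))`.
If `x` is a root of `Φ_m`, every geometric sum vanishes, since `Φ_m` divides
`(X ^ m - 1) / (X ^ (m / p) - 1)`. If instead `x ^ d = 1` for a proper divisor `d` of `m`, then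
for a prime `p ∣ m / d` we get `x ^ (m / p) = 1`, and the `p`-th factor is `1 - p⁻¹ p = 0`.
-/

open MonoidAlgebra Polynomial

/-- The averaging element `e_{ρ'} = (1/|ρ'|)·∑_{h ∈ ρ'} h` of the group algebra `Σ[ρ]`
associated to a subgroup `ρ'` of the finite group `ρ`. -/
noncomputable def avgIdem (S : Type*) [CommRing S] {ρ : Type*} [CommGroup ρ] [Fintype ρ]
    (ρ' : Subgroup ρ) : MonoidAlgebra S ρ :=
  haveI : Fintype ρ' := Fintype.ofFinite ρ'
  Ring.inverse ((Nat.card ρ' : S)) • ∑ h : ρ', MonoidAlgebra.of S ρ (h : ρ)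

/-- The primitive idempotent `e_prim = ∏_{p ∣ m prime} (1 − e_{ρ_p})` of the group algebra
`Σ[ρ]` of a cyclic group `ρ` of order `m` with chosen generator `t`; here `ρ_p` is the
unique subgroup of prime order `p`, namely the one generated by `t^(m/p)`. -/
noncomputable def primIdem (S : Type*) [CommRing S] {ρ : Type*} [CommGroup ρ] [Fintype ρ]
    (m : ℕ) (t : ρ) : MonoidAlgebra S ρ :=
  ∏ p ∈ m.primeFactors, (1 - avgIdem S (Subgroup.zpowers (t ^ (m / p))))

open Finset

namespace Polynomial

theorem cyclotomic_dvd_geom_sum_X_pow (R : Type*) [CommRing R] {q n : ℕ}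
    (hq : q ∈ n.properDivisors) : cyclotomic n R ∣ ∑ i ∈ range (n / q), (X ^ q) ^ i := by
  obtain ⟨hqn, hlt⟩ := Nat.mem_properDivisors.mp hq
  have hn : n ≠ 0 := by omega
  have hq0 : 0 < q := Nat.pos_of_dvd_of_pos hqn (by omega)
  have hgeom : (X ^ q - 1) * ∑ i ∈ range (n / q), ((X : R[X]) ^ q) ^ i = X ^ n - 1 := by
    rw [mul_comm, geom_sum_mul, ← pow_mul, Nat.mul_div_cancel' hqn]
  have hprod := X_pow_sub_one_mul_prod_cyclotomic_eq_X_pow_sub_one_of_dvd R hqn hn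
  have hmonic : (X ^ q - 1 : R[X]).Monic := by
    simpa only [map_one] using monic_X_pow_sub_C (1 : R) hq0.ne'
  rw [hmonic.isRegular.left (hgeom.trans hprod.symm)]
  refine dvd_prod_of_mem _ (mem_sdiff.mpr ⟨Nat.mem_divisors_self n hn, fun h => ?_⟩)
  exact hlt.not_ge (Nat.le_of_dvd hq0 (Nat.dvd_of_mem_divisors h))

theorem pow_eq_one_of_aeval_cyclotomic_eq_zero {R A : Type*} [CommRing R] [Ring A] [Algebra R A]
    {x : A} {d : ℕ} (hx : aeval x (cyclotomic d R) = 0) : x ^ d = 1 := by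
  obtain ⟨g, hg⟩ := cyclotomic.dvd_X_pow_sub_one d R
  have := congrArg (aeval x) hg
  rwa [map_mul, hx, zero_mul, map_sub, map_pow, aeval_X, map_one, sub_eq_zero] at this

end Polynomial

namespace MonoidAlgebra

theorem existsUnique_algHom_of_forall_mem_zpowers {S A ρ : Type*} [CommSemiring S] [Semiring A]
    [Algebra S A] [Group ρ] {t : ρ} (ht : ∀ g, g ∈ Subgroup.zpowers t) (u : Aˣ)
    (hu : u ^ orderOf t = 1) : ∃! π : MonoidAlgebra S ρ →ₐ[S] A, π (of S ρ t) = u := by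
  set F : ρ →* A := (Units.coeHom A).comp
    (monoidHomOfForallMemZpowers ht (orderOf_dvd_of_pow_eq_one hu))
  refine ⟨lift S A ρ F, by simp [F], fun π (hπ : π (of S ρ t) = u) => ?_⟩
  apply (lift S A ρ).symm.injective
  have hunits : ((lift S A ρ).symm π).toHomUnits = ((lift S A ρ).symm (lift S A ρ F)).toHomUnits :=
    (MonoidHom.eq_iff_eq_on_generator ht _ _).mpr (Units.ext (by simpa [F] using hπ))
  ext g
  exact congrArg Units.val (DFunLike.congr_fun hunits g)

theorem avgIdem_zpowers (S : Type*) [CommRing S] {ρ : Type*} [CommGroup ρ] [Fintype ρ] (s : ρ) :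
    avgIdem S (Subgroup.zpowers s) =
      Ring.inverse (orderOf s : S) • ∑ j ∈ range (orderOf s), of S ρ s ^ j := by
  rw [avgIdem, Nat.card_zpowers, ← Fin.sum_univ_eq_sum_range (fun j => of S ρ s ^ j)]
  congr 1
  convert (Fintype.sum_equiv (finEquivZPowers (isOfFinOrder_of_finite s))
    (fun j => of S ρ s ^ (j : ℕ)) (fun h => of S ρ h) (fun j => (map_pow _ _ _).symm)).symm

theorem primIdem_eq_prod_geom_sum (S : Type*) [CommRing S] {ρ : Type*} [CommGroup ρ] [Fintype ρ]
    {m : ℕ} {t : ρ} (ht : orderOf t = m) :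
    primIdem S m t = ∏ p ∈ m.primeFactors,
      (1 - Ring.inverse (p : S) • ∑ j ∈ range p, (of S ρ t ^ (m / p)) ^ j) := by
  subst ht
  refine prod_congr rfl fun p hp => ?_
  rw [avgIdem_zpowers, orderOf_pow_orderOf_div ((Nat.mem_primeFactors.mp hp).2.2)
    (Nat.dvd_of_mem_primeFactors hp), map_pow]

end MonoidAlgebra

section GeomSum

variable {S A : Type*} [CommRing S] [CommRing A] [Algebra S A] {x : A} {m : ℕ}

theorem prod_one_sub_inv_smul_geom_sum_eq_one (hx : aeval x (cyclotomic m S) = 0) :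
    ∏ p ∈ m.primeFactors, (1 - Ring.inverse (p : S) • ∑ j ∈ range p, (x ^ (m / p)) ^ j) = 1 := by
  refine prod_eq_one fun p hp => ?_
  obtain ⟨hp, hpm, hm⟩ := Nat.mem_primeFactors.mp hp
  have hdiv : m / p ∈ m.properDivisors := Nat.mem_properDivisors.mpr
    ⟨Nat.div_dvd_of_dvd hpm, Nat.div_lt_self (Nat.pos_of_ne_zero hm) hp.one_lt⟩
  have hsum := aeval_eq_zero_of_dvd_aeval_eq_zero (cyclotomic_dvd_geom_sum_X_pow S hdiv) hx
  simp only [Nat.div_div_self hpm hm, map_sum, map_pow, aeval_X] at hsum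
  rw [hsum, smul_zero, sub_zero]

theorem prod_one_sub_inv_smul_geom_sum_eq_zero (hu : IsUnit (m : S)) (hm : m ≠ 0) {d : ℕ}
    (hdm : d ∣ m) (hne : d ≠ m) (hx : x ^ d = 1) :
    ∏ p ∈ m.primeFactors, (1 - Ring.inverse (p : S) • ∑ j ∈ range p, (x ^ (m / p)) ^ j) = 0 := by
  have hmd : m / d ≠ 1 := fun h => hne (Nat.eq_of_dvd_of_div_eq_one hdm h)
  obtain ⟨p, hp, hpmd⟩ := Nat.exists_prime_and_dvd hmd
  have hpm : p ∣ m := hpmd.trans (Nat.div_dvd_of_dvd hdm)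
  refine prod_eq_zero (Nat.mem_primeFactors.mpr ⟨hp, hpm, hm⟩) ?_
  obtain ⟨k, hk⟩ := Nat.dvd_div_of_mul_dvd (mul_comm d p ▸ Nat.mul_dvd_of_dvd_div hdm hpmd)
  have hpu : IsUnit (p : S) := isUnit_of_dvd_unit (Nat.cast_dvd_cast hpm) hu
  rw [hk, pow_mul, hx]
  simp only [one_pow, sum_const, card_range]
  rw [← Nat.cast_smul_eq_nsmul S, smul_smul, Ring.inverse_mul_cancel _ hpu, one_smul, sub_self]

end GeomSum

theorem primIdem_image_under_cyclotomic_projections_general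
    (S : Type*) [CommRing S] (ρ : Type*) [CommGroup ρ] [Fintype ρ]
    (m : ℕ) (hcard : Fintype.card ρ = m) (hu : IsUnit (m : S))
    (t : ρ) (ht : ∀ g : ρ, g ∈ Subgroup.zpowers t) :
    ∀ d ∈ m.divisors,
      (∃! π : MonoidAlgebra S ρ →ₐ[S] S[X] ⧸ Ideal.span {cyclotomic d S},
          π (MonoidAlgebra.of S ρ t) = Ideal.Quotient.mk (Ideal.span {cyclotomic d S}) X) ∧
      ∀ π : MonoidAlgebra S ρ →ₐ[S] S[X] ⧸ Ideal.span {cyclotomic d S},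
        π (MonoidAlgebra.of S ρ t) = Ideal.Quotient.mk (Ideal.span {cyclotomic d S}) X →
        π (primIdem S m t) = if d = m then 1 else 0 := by
  intro d hd
  obtain ⟨hdm, hm⟩ := Nat.mem_divisors.mp hd
  have horder : orderOf t = m := by
    rw [orderOf_eq_card_of_forall_mem_zpowers ht, Nat.card_eq_fintype_card, hcard]
  -- `S[X] ⧸ Ideal.span {Φ_d}` is `AdjoinRoot Φ_d` by definition, with the class of `X` as `root`.
  have hroot : aeval (AdjoinRoot.root (cyclotomic d S)) (cyclotomic d S) = 0 := by
    rw [AdjoinRoot.aeval_eq, AdjoinRoot.mk_self]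
  have hxd := pow_eq_one_of_aeval_cyclotomic_eq_zero hroot
  have hxm : AdjoinRoot.root (cyclotomic d S) ^ m = 1 := by
    obtain ⟨k, rfl⟩ := hdm
    rw [pow_mul, hxd, one_pow]
  refine ⟨existsUnique_algHom_of_forall_mem_zpowers ht (IsUnit.of_pow_eq_one hxm hm).unit
    (Units.ext (by simp [horder, hxm])), fun π hπ => ?_⟩
  rw [primIdem_eq_prod_geom_sum S horder, map_prod]
  simp only [map_sub, map_one, map_smul, map_sum, map_pow, hπ]
  split_ifs with hdm'
  · subst hdm'
    exact prod_one_sub_inv_smul_geom_sum_eq_one hroot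
  · exact prod_one_sub_inv_smul_geom_sum_eq_zero hu hm hdm hdm' hxd

/-- For each positive divisor `d` of `m` there is a unique `Σ`-algebra homomorphism
`π_d : Σ[ρ] → Σ[X]/(Φ_d(X))` sending the chosen generator `t` of `ρ` to the class of `X`;
it satisfies `π_m(e_prim) = 1` and `π_d(e_prim) = 0` for every proper divisor `d` of `m`. -/
theorem primIdem_image_under_cyclotomic_projections
    (S : Type*) [CommRing S] [Nontrivial S] (ρ : Type*) [CommGroup ρ] [Fintype ρ]
    (m : ℕ) (hm : 0 < m) (hcard : Fintype.card ρ = m) (hu : IsUnit (m : S))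
    (t : ρ) (ht : ∀ g : ρ, g ∈ Subgroup.zpowers t) :
    ∀ d ∈ m.divisors,
      (∃! π : MonoidAlgebra S ρ →ₐ[S] S[X] ⧸ Ideal.span {cyclotomic d S},
          π (MonoidAlgebra.of S ρ t) = Ideal.Quotient.mk (Ideal.span {cyclotomic d S}) X) ∧
      ∀ π : MonoidAlgebra S ρ →ₐ[S] S[X] ⧸ Ideal.span {cyclotomic d S},
        π (MonoidAlgebra.of S ρ t) = Ideal.Quotient.mk (Ideal.span {cyclotomic d S}) X →
        π (primIdem S m t) = if d = m then 1 else 0 :=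
  primIdem_image_under_cyclotomic_projections_general S ρ m hcard hu t ht
end

section
/- If u : ρ → H is a non-injective group homomorphism from the cyclic group ρ of order m to an arbitrary group H, then the induced Σ-algebra homomorphism Σ[ρ] → Σ[H] between group algebras sends the primitive idempotent e_prim to 0. -/
open MonoidAlgebra

/-- If `u : ρ → H` is a non-injective group homomorphism, then the induced `Σ`-algebra
homomorphism `Σ[ρ] → Σ[H]` between group algebras sends the primitive idempotent
`e_prim` to `0`. -/
theorem mapDomain_primIdem_eq_zero_of_not_injective
    (S : Type*) [CommRing S] [Nontrivial S] (ρ : Type*) [CommGroup ρ] [Fintype ρ]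
    (H : Type*) [Group H]
    (m : ℕ) (hm : 0 < m) (hcard : Fintype.card ρ = m) (hu : IsUnit (m : S))
    (t : ρ) (ht : ∀ g : ρ, g ∈ Subgroup.zpowers t)
    (u : ρ →* H) (hinj : ¬ Function.Injective u) :
    MonoidAlgebra.mapDomainAlgHom S S u (primIdem S m t) = 0 := by
  -- extract a nontrivial kernel element
  obtain ⟨a, b, hab, hne⟩ := Function.not_injective_iff.mp hinj
  set g : ρ := a * b⁻¹ with hgdef
  have hg1 : u g = 1 := by simp [hgdef, hab]
  have hgne : g ≠ 1 := by
    intro h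
    exact hne (by rwa [mul_inv_eq_one] at h)
  -- get a prime-order power of g
  have hnpos : 0 < orderOf g := orderOf_pos g
  have hn1 : orderOf g ≠ 1 := by simpa [orderOf_eq_one_iff] using hgne
  set q : ℕ := (orderOf g).minFac with hqdef
  have hq : q.Prime := Nat.minFac_prime hn1
  set g' : ρ := g ^ (orderOf g / q) with hg'def
  have horder : orderOf g' = q :=
    orderOf_pow_orderOf_div hnpos.ne' (Nat.minFac_dvd _)
  have hg'1 : u g' = 1 := by simp [hg'def, map_pow, hg1]
  have hqm : q ∣ m := by
    rw [← horder, ← hcard]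
    exact orderOf_dvd_card
  have htord : orderOf t = m := by
    rw [orderOf_eq_card_of_forall_mem_zpowers ht, Nat.card_eq_fintype_card, hcard]
  -- the canonical subgroup of order q
  set K : Subgroup ρ := Subgroup.zpowers (t ^ (m / q)) with hKdef
  have hcardK : Nat.card K = q := by
    rw [hKdef, Nat.card_zpowers, orderOf_pow, htord,
      Nat.gcd_eq_right (Nat.div_dvd_of_dvd hqm), Nat.div_div_self hqm hm.ne']
  -- g' ∈ K
  have hg'K : g' ∈ K := by
    obtain ⟨k, hk⟩ := ht g'
    have hk' : t ^ k = g' := hk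
    have hpow : t ^ (k * (q : ℤ)) = 1 := by
      rw [zpow_mul, hk', zpow_natCast, ← horder, pow_orderOf_eq_one]
    have hdvd : ((m : ℤ)) ∣ k * q := by
      rw [← htord]
      exact orderOf_dvd_iff_zpow_eq_one.mpr hpow
    have hdvd2 : ((m / q : ℕ) : ℤ) ∣ k := by
      obtain ⟨c, hc⟩ := hdvd
      refine ⟨c, ?_⟩
      have hmq : (m : ℤ) = (q : ℤ) * ((m / q : ℕ) : ℤ) := by
        exact_mod_cast (Nat.mul_div_cancel' hqm).symm
      have hq0 : (q : ℤ) ≠ 0 := by exact_mod_cast hq.ne_zero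
      have : k * q = ((m / q : ℕ) : ℤ) * c * q := by
        rw [hc, hmq]; ring
      exact mul_right_cancel₀ hq0 this
    obtain ⟨c, hc⟩ := hdvd2
    refine ⟨c, ?_⟩
    show (t ^ (m / q)) ^ c = g'
    rw [← zpow_natCast t (m / q), ← zpow_mul, ← hc, hk']
  -- K = zpowers g', so u is trivial on K
  have hKeq : Subgroup.zpowers g' = K := by
    refine Subgroup.eq_of_le_of_card_ge ?_ ?_
    · rwa [Subgroup.zpowers_le]
    · rw [hcardK, Nat.card_zpowers, horder]
  have huK : ∀ h : ρ, h ∈ K → u h = 1 := by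
    intro h hh
    rw [← hKeq] at hh
    obtain ⟨k, hk⟩ := hh
    rw [← hk, map_zpow, hg'1, one_zpow]
  -- q invertible in S
  have hqu : IsUnit ((q : ℕ) : S) := isUnit_of_dvd_unit (Nat.cast_dvd_cast hqm) hu
  -- the factor at q maps to 0
  have hq_mem : q ∈ m.primeFactors := Nat.mem_primeFactors.mpr ⟨hq, hqm, hm.ne'⟩
  have hfactor : MonoidAlgebra.mapDomainAlgHom S S u (1 - avgIdem S K) = 0 := by
    rw [map_sub, map_one, sub_eq_zero]
    rw [avgIdem, Subsingleton.elim (Fintype.ofFinite ↥K)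
      (inferInstance : Fintype ↥K), map_smul, map_sum]
    have hterm : ∀ h : K, (MonoidAlgebra.mapDomainAlgHom S S u)
        (MonoidAlgebra.of S ρ (h : ρ)) = 1 := by
      intro h
      have : (MonoidAlgebra.mapDomainAlgHom S S u) (MonoidAlgebra.of S ρ (h : ρ))
          = MonoidAlgebra.of S H (u (h : ρ)) := by
        simp [MonoidAlgebra.mapDomainAlgHom, MonoidAlgebra.of_apply,
          Finsupp.mapDomain_single]
      rw [this, huK _ h.2, map_one]
    rw [Finset.sum_congr rfl (fun h _ => hterm h), Finset.sum_const, Finset.card_univ]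
    rw [← Nat.card_eq_fintype_card, hcardK, ← Nat.cast_smul_eq_nsmul S, smul_smul,
      Ring.inverse_mul_cancel _ hqu, one_smul]
  -- conclude
  rw [primIdem, ← Finset.mul_prod_erase _ _ hq_mem, map_mul, hfactor, zero_mul]
end

section
/- An element a ∈ Σ[ρ] satisfies e_prim·a = a (equivalently, a lies in the ideal e_prim·Σ[ρ]) if and only if, for every prime p dividing m, the Σ-algebra homomorphism Σ[ρ] → Σ[ρ/ρ_p] induced by the quotient group homomorphism ρ → ρ/ρ_p sends a to 0. In particular, e_prim is the maximal idempotent of Σ[ρ] whose image under every such quotient map is zero. -/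
/-!
For a subgroup `H` whose order is invertible, `e_H` is an idempotent that maps to `1` in
`Σ[ρ/H]`, and `e_H · h = e_H` for `h ∈ H`, so `e_H · a` depends only on the image of `a` in
`Σ[ρ/H]`. Hence `e_H · a = 0`, i.e. `(1 - e_H) · a = a`, exactly when `a` maps to `0` there.
Since the factors `1 - e_{ρ_p}` of `e_prim` are commuting idempotents, `e_prim · a = a` holds
exactly when each factor fixes `a`.
-/

open MonoidAlgebra

theorem Finset.prod_mul_eq_self_iff_of_isIdempotentElem {ι M : Type*} [CommMonoid M]
    {s : Finset ι} {f : ι → M} (hf : ∀ i ∈ s, IsIdempotentElem (f i)) {a : M} :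
    (∏ i ∈ s, f i) * a = a ↔ ∀ i ∈ s, f i * a = a := by
  classical
  refine ⟨fun h i hi => ?_, fun h => ?_⟩
  · have hfi : f i * ∏ j ∈ s, f j = ∏ j ∈ s, f j := by
      rw [← Finset.mul_prod_erase s f hi, ← mul_assoc, hf i hi]
    rw [← h, ← mul_assoc, hfi]
  · exact Finset.prod_induction f (fun x => x * a = a)
      (fun x y hx hy => by rw [mul_assoc, hy, hx]) (one_mul a) h

theorem Ring.inverse_natCard_smul_sum_const {S M α : Type*} [CommRing S] [AddCommGroup M]
    [Module S M] [Fintype α] (hα : IsUnit (Nat.card α : S)) (x : M) :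
    Ring.inverse (Nat.card α : S) • ∑ _a : α, x = x := by
  rw [Finset.sum_const, Finset.card_univ, ← Nat.card_eq_fintype_card, ← Nat.cast_smul_eq_nsmul S,
    smul_smul, Ring.inverse_mul_cancel _ hα, one_smul]

section avgIdem

variable {S : Type*} [CommRing S] {ρ : Type*} [CommGroup ρ] [Fintype ρ] {H : Subgroup ρ}

theorem avgIdem_eq_smul_sum [Fintype H] :
    avgIdem S H = Ring.inverse (Nat.card H : S) • ∑ h : H, of S ρ h := by
  unfold avgIdem
  congr!

theorem avgIdem_mul_of_mem {h : ρ} (hh : h ∈ H) : avgIdem S H * of S ρ h = avgIdem S H := by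
  classical
  rw [avgIdem_eq_smul_sum, smul_mul_assoc, Finset.sum_mul]
  congr 1
  exact Fintype.sum_equiv (Equiv.mulRight ⟨h, hh⟩) _ _ fun k => by simp

theorem avgIdem_mul_of_eq_of_mk_eq {g g' : ρ} (hgg' : (g : ρ ⧸ H) = g') :
    avgIdem S H * of S ρ g = avgIdem S H * of S ρ g' := by
  rw [← mul_inv_cancel_left g g', map_mul, ← mul_assoc, mul_right_comm,
    avgIdem_mul_of_mem (QuotientGroup.eq.mp hgg')]

theorem avgIdem_mul_eq_sum (a : MonoidAlgebra S ρ) :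
    avgIdem S H * a = (mapDomainAlgHom S S (QuotientGroup.mk' H) a).coeff.sum
      fun q r => r • (avgIdem S H * of S ρ q.out) := by
  induction a using MonoidAlgebra.induction_linear with
  | zero => simp
  | add a b ha hb =>
    rw [mul_add, ha, hb, map_add, coeff_add, Finsupp.sum_add_index' (by simp) (by simp [add_smul])]
  | single g r =>
    rw [mapDomainAlgHom_apply, mapDomain_single, coeff_single,
      Finsupp.sum_single_index (by simp), QuotientGroup.mk'_apply,
      avgIdem_mul_of_eq_of_mk_eq (QuotientGroup.out_eq' _), ← mul_smul_comm, of_apply, smul_single',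
      mul_one]

theorem mapDomainAlgHom_mk'_avgIdem (hH : IsUnit (Nat.card H : S)) :
    mapDomainAlgHom S S (QuotientGroup.mk' H) (avgIdem S H) = 1 := by
  classical
  rw [avgIdem_eq_smul_sum]
  have hmk : ∀ h : H, mapDomainAlgHom S S (QuotientGroup.mk' H) (of S ρ h) = 1 := fun h => by
    simp [mapDomain_single, one_def, (QuotientGroup.eq_one_iff _).2 h.2]
  rw [map_smul, map_sum, Finset.sum_congr rfl fun h _ => hmk h,
    Ring.inverse_natCard_smul_sum_const hH]

theorem isIdempotentElem_avgIdem (hH : IsUnit (Nat.card H : S)) :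
    IsIdempotentElem (avgIdem S H) := by
  classical
  rw [isIdempotentElem_iff]
  nth_rw 2 [avgIdem_eq_smul_sum]
  rw [mul_smul_comm, Finset.mul_sum, Finset.sum_congr rfl fun h _ => avgIdem_mul_of_mem h.2,
    Ring.inverse_natCard_smul_sum_const hH]

theorem avgIdem_mul_eq_zero_iff (hH : IsUnit (Nat.card H : S)) {a : MonoidAlgebra S ρ} :
    avgIdem S H * a = 0 ↔ mapDomainAlgHom S S (QuotientGroup.mk' H) a = 0 := by
  refine ⟨fun h => ?_, fun h => by rw [avgIdem_mul_eq_sum, h, coeff_zero, Finsupp.sum_zero_index]⟩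
  have hπ := congr_arg (mapDomainAlgHom S S (QuotientGroup.mk' H)) h
  rwa [map_mul, mapDomainAlgHom_mk'_avgIdem hH, one_mul, map_zero] at hπ

theorem one_sub_avgIdem_mul_eq_self_iff (hH : IsUnit (Nat.card H : S)) {a : MonoidAlgebra S ρ} :
    (1 - avgIdem S H) * a = a ↔ mapDomainAlgHom S S (QuotientGroup.mk' H) a = 0 := by
  rw [one_sub_mul, sub_eq_self, avgIdem_mul_eq_zero_iff hH]

end avgIdem

theorem prod_one_sub_avgIdem_mul_eq_self_iff {S : Type*} [CommRing S] {ρ : Type*} [CommGroup ρ]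
    [Fintype ρ] {ι : Type*} {s : Finset ι} {H : ι → Subgroup ρ}
    (hH : ∀ i ∈ s, IsUnit (Nat.card (H i) : S)) (a : MonoidAlgebra S ρ) :
    (∏ i ∈ s, (1 - avgIdem S (H i))) * a = a ↔
      ∀ i ∈ s, mapDomainAlgHom S S (QuotientGroup.mk' (H i)) a = 0 := by
  rw [Finset.prod_mul_eq_self_iff_of_isIdempotentElem fun i hi =>
    (isIdempotentElem_avgIdem (hH i hi)).one_sub]
  exact forall₂_congr fun i hi => one_sub_avgIdem_mul_eq_self_iff (hH i hi)

theorem primIdem_mul_eq_self_iff_quotient_maps_eq_zero_general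
    (S : Type*) [CommRing S] (ρ : Type*) [CommGroup ρ] [Fintype ρ]
    (m : ℕ) (hcard : Fintype.card ρ = m) (hu : IsUnit (m : S))
    (t : ρ) :
    (∀ a : MonoidAlgebra S ρ,
      primIdem S m t * a = a ↔
        ∀ p ∈ m.primeFactors,
          MonoidAlgebra.mapDomainAlgHom S S
            (QuotientGroup.mk' (Subgroup.zpowers (t ^ (m / p)))) a = 0) ∧
    ∀ f : MonoidAlgebra S ρ, IsIdempotentElem f →
      (∀ p ∈ m.primeFactors,
        MonoidAlgebra.mapDomainAlgHom S S
          (QuotientGroup.mk' (Subgroup.zpowers (t ^ (m / p)))) f = 0) →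
      primIdem S m t * f = f := by
  have hunit : ∀ p ∈ m.primeFactors, IsUnit (Nat.card (Subgroup.zpowers (t ^ (m / p))) : S) :=
    fun p _ => isUnit_of_dvd_unit (Nat.cast_dvd_cast (by
      rw [Nat.card_zpowers, ← hcard]
      exact orderOf_dvd_card)) hu
  have key := prod_one_sub_avgIdem_mul_eq_self_iff hunit
  exact ⟨key, fun f _ hf => (key f).2 hf⟩

/-- An element `a ∈ Σ[ρ]` satisfies `e_prim·a = a` (i.e. lies in the ideal `e_prim·Σ[ρ]`)
if and only if, for every prime `p` dividing `m`, the `Σ`-algebra homomorphism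
`Σ[ρ] → Σ[ρ/ρ_p]` induced by the quotient map `ρ → ρ/ρ_p` sends `a` to `0`.
In particular, `e_prim` is the maximal idempotent of `Σ[ρ]` whose image under every such
quotient map is zero. -/
theorem primIdem_mul_eq_self_iff_quotient_maps_eq_zero
    (S : Type*) [CommRing S] [Nontrivial S] (ρ : Type*) [CommGroup ρ] [Fintype ρ]
    (m : ℕ) (hm : 0 < m) (hcard : Fintype.card ρ = m) (hu : IsUnit (m : S))
    (t : ρ) (ht : ∀ g : ρ, g ∈ Subgroup.zpowers t) :
    (∀ a : MonoidAlgebra S ρ,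
      primIdem S m t * a = a ↔
        ∀ p ∈ m.primeFactors,
          MonoidAlgebra.mapDomainAlgHom S S
            (QuotientGroup.mk' (Subgroup.zpowers (t ^ (m / p)))) a = 0) ∧
    ∀ f : MonoidAlgebra S ρ, IsIdempotentElem f →
      (∀ p ∈ m.primeFactors,
        MonoidAlgebra.mapDomainAlgHom S S
          (QuotientGroup.mk' (Subgroup.zpowers (t ^ (m / p)))) f = 0) →
      primIdem S m t * f = f :=
  primIdem_mul_eq_self_iff_quotient_maps_eq_zero_general S ρ m hcard hu t
end

section
/- Let l be a field containing a primitive m-th root of unity and ρ a cyclic group of order m. The Fourier transform of the primitive idempotent e_prim ∈ l[ρ] is the indicator function of the injective characters: F(e_prim)(χ) = 1 if χ : ρ → lˣ is injective, and F(e_prim)(χ) = 0 otherwise. Consequently, F maps the primitive part e_prim·l[ρ] bijectively onto the set of functions ρ^∨ → l that vanish on every non-injective character. -/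
/-!
Evaluation at a character `χ` is an algebra map `l[ρ] → l`, and by orthogonality it sends `e_{ρ'}`
to `1` or `0` according as `χ` is trivial on `ρ'` or not. So `F(e_prim)(χ) = 0` exactly when `χ`
is trivial on some `ρ_p`, i.e. (every nontrivial subgroup of a cyclic group contains some `ρ_p`)
exactly when `ker χ ≠ ⊥`.

Since `l` has enough roots of unity, `F` is an algebra isomorphism `l[ρ] ≃ (ρ^∨ → l)`: it is
injective by Dedekind's independence of the characters `χ ↦ χ g` of `ρ^∨`, which are distinct
because characters separate the points of `ρ`, and both sides have dimension `|ρ|`. An algebra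
isomorphism maps `{x | e x = x}` onto `{y | F(e) y = y}`, and multiplication by the indicator of
the injective characters fixes exactly the functions vanishing off them.
-/

open MonoidAlgebra

/-- The Fourier transform `F : l[ρ] → (ρ^∨ → l)`, sending `a = ∑_g a_g·g` to the function
`χ ↦ ∑_g a_g·χ(g)`. -/
noncomputable def charFourier (l : Type*) [Field l] (ρ : Type*) [CommGroup ρ] [Fintype ρ]
    (a : MonoidAlgebra l ρ) : (ρ →* lˣ) → l :=
  fun χ => ∑ g : ρ, a.coeff g * (χ g : l)

theorem Set.indicator_one_mul_eq_self_iff {α M₀ : Type*} [MulZeroOneClass M₀] {s : Set α}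
    {f : α → M₀} : s.indicator 1 * f = f ↔ ∀ x ∉ s, f x = 0 := by
  refine funext_iff.trans (forall_congr' fun x => ?_)
  by_cases hx : x ∈ s <;> simp [hx, eq_comm]

theorem MulEquiv.bijOn_setOf_mul_eq_self {M N : Type*} [Mul M] [Mul N] (f : M ≃* N) (e : M) :
    Set.BijOn f {x | e * x = x} {y | f e * y = y} :=
  f.toEquiv.bijOn fun x => by
    rw [Set.mem_ofPred_eq, Set.mem_ofPred_eq, MulEquiv.toEquiv_eq_coe, MulEquiv.coe_toEquiv,
      ← map_mul, f.injective.eq_iff]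

theorem IsPrimitiveRoot.hasEnoughRootsOfUnity {R : Type*} [CommRing R] [IsDomain R] {ζ : R}
    {n : ℕ} [NeZero n] (h : IsPrimitiveRoot ζ n) : HasEnoughRootsOfUnity R n :=
  HasEnoughRootsOfUnity.of_card_le h.card_rootsOfUnity.ge

section CyclicGroup

variable {G : Type*} [CommGroup G] [Finite G] {t : G}

theorem card_zpowers_pow_card_div (ht : ∀ g : G, g ∈ Subgroup.zpowers t) {p : ℕ}
    (hp : p ∣ Nat.card G) : Nat.card (Subgroup.zpowers (t ^ (Nat.card G / p))) = p := by
  rw [Nat.card_zpowers, orderOf_pow, orderOf_eq_card_of_forall_mem_zpowers ht,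
    Nat.gcd_eq_right (Nat.div_dvd_of_dvd hp), Nat.div_div_self hp Nat.card_pos.ne']

theorem zpowers_pow_card_div_ne_bot (ht : ∀ g : G, g ∈ Subgroup.zpowers t) {p : ℕ}
    (hp : p ∈ (Nat.card G).primeFactors) : Subgroup.zpowers (t ^ (Nat.card G / p)) ≠ ⊥ := by
  intro hbot
  have hcard := card_zpowers_pow_card_div ht (Nat.dvd_of_mem_primeFactors hp)
  rw [hbot, Subgroup.card_bot] at hcard
  exact (Nat.prime_of_mem_primeFactors hp).one_lt.ne hcard

theorem zpowers_pow_card_div_eq_ker_powMonoidHom (ht : ∀ g : G, g ∈ Subgroup.zpowers t) {p : ℕ}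
    (hp : p ∣ Nat.card G) :
    Subgroup.zpowers (t ^ (Nat.card G / p)) = (powMonoidHom p : G →* G).ker := by
  have : IsCyclic G := ⟨t, ht⟩
  refine Subgroup.eq_of_le_of_card_ge ?_ ?_
  · rw [Subgroup.zpowers_le, MonoidHom.mem_ker, powMonoidHom_apply, ← pow_mul,
      Nat.div_mul_cancel hp, pow_card_eq_one']
  · rw [IsCyclic.card_powMonoidHom_ker, card_zpowers_pow_card_div ht hp, Nat.gcd_eq_right hp]

theorem exists_zpowers_pow_card_div_le_of_ne_bot (ht : ∀ g : G, g ∈ Subgroup.zpowers t)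
    {K : Subgroup G} (hK : K ≠ ⊥) :
    ∃ p ∈ (Nat.card G).primeFactors, Subgroup.zpowers (t ^ (Nat.card G / p)) ≤ K := by
  obtain ⟨p, hp, hpK⟩ := Nat.exists_prime_and_dvd (K.one_lt_card_iff_ne_bot.mpr hK).ne'
  have := Fact.mk hp
  obtain ⟨x, hx⟩ := exists_prime_orderOf_dvd_card' p hpK
  have hpG : p ∣ Nat.card G := hpK.trans K.card_subgroup_dvd_card
  refine ⟨p, Nat.mem_primeFactors.mpr ⟨hp, hpG, Nat.card_pos.ne'⟩, ?_⟩
  have hx_mem : (x : G) ∈ Subgroup.zpowers (t ^ (Nat.card G / p)) := by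
    rw [zpowers_pow_card_div_eq_ker_powMonoidHom ht hpG, MonoidHom.mem_ker, powMonoidHom_apply,
      ← hx, ← Subgroup.orderOf_coe, pow_orderOf_eq_one]
  have hx_gen : Subgroup.zpowers (x : G) = Subgroup.zpowers (t ^ (Nat.card G / p)) :=
    Subgroup.eq_of_le_of_card_ge (Subgroup.zpowers_le.mpr hx_mem) <| by
      rw [card_zpowers_pow_card_div ht hpG, Nat.card_zpowers, Subgroup.orderOf_coe, hx]
  rw [← hx_gen, Subgroup.zpowers_le]
  exact x.2

end CyclicGroup

section Fourier

variable (l : Type*) [Field l] (ρ : Type*) [CommGroup ρ]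

noncomputable def charFourierAlgHom : MonoidAlgebra l ρ →ₐ[l] ((ρ →* lˣ) → l) :=
  AlgHom.pi fun χ => MonoidAlgebra.lift l l ρ ((Units.coeHom l).comp χ)

variable [Fintype ρ]

theorem coe_charFourierAlgHom : ⇑(charFourierAlgHom l ρ) = charFourier l ρ := by
  ext a χ
  rw [charFourierAlgHom, AlgHom.pi_apply, MonoidAlgebra.lift_apply,
    Finsupp.sum_fintype _ _ (by simp)]
  simp [charFourier]

theorem charFourier_eq_sum_smul (a : MonoidAlgebra l ρ) :
    charFourier l ρ a = ∑ g, a.coeff g • fun χ : ρ →* lˣ => (χ g : l) := by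
  ext χ
  simp [charFourier]

variable [HasEnoughRootsOfUnity l (Monoid.exponent ρ)]

theorem linearIndependent_evalChars :
    LinearIndependent l fun (g : ρ) (χ : ρ →* lˣ) => (χ g : l) := by
  refine (linearIndependent_monoidHom (ρ →* lˣ) l).comp
    (fun g => (Units.coeHom l).comp ((CommGroup.monoidHomMonoidHomEquiv ρ l).symm g))
    fun g g' h => ?_
  rw [← CommGroup.forall_apply_eq_apply_iff ρ (M := l)]
  exact fun χ => Units.ext (DFunLike.congr_fun h χ)

theorem charFourier_injective : Function.Injective (charFourier l ρ) := by
  rw [← coe_charFourierAlgHom, injective_iff_map_eq_zero]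
  intro a ha
  have hcoeff := Fintype.linearIndependent_iff.mp (linearIndependent_evalChars l ρ) a.coeff
    (by rw [← charFourier_eq_sum_smul, ← coe_charFourierAlgHom, ha])
  ext g
  exact hcoeff g

theorem charFourier_bijective : Function.Bijective (charFourier l ρ) := by
  have : Fintype (ρ →* lˣ) := Fintype.ofFinite _
  have hdim : Module.finrank l (MonoidAlgebra l ρ) = Module.finrank l ((ρ →* lˣ) → l) := by
    rw [Module.finrank_eq_card_basis (MonoidAlgebra.basis ρ l),
      Module.finrank_fintype_fun_eq_card, ← Nat.card_eq_fintype_card,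
      ← Nat.card_eq_fintype_card, CommGroup.card_monoidHom_of_hasEnoughRootsOfUnity]
  have hinj := charFourier_injective l ρ
  rw [← coe_charFourierAlgHom] at hinj ⊢
  exact ⟨hinj, (LinearMap.injective_iff_surjective_of_finrank_eq_finrank hdim
    (f := (charFourierAlgHom l ρ).toLinearMap)).mp hinj⟩

noncomputable def charFourierAlgEquiv : MonoidAlgebra l ρ ≃ₐ[l] ((ρ →* lˣ) → l) :=
  AlgEquiv.ofBijective (charFourierAlgHom l ρ)
    (coe_charFourierAlgHom l ρ ▸ charFourier_bijective l ρ)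

theorem coe_charFourierAlgEquiv : ⇑(charFourierAlgEquiv l ρ) = charFourier l ρ :=
  coe_charFourierAlgHom l ρ

end Fourier

section Idempotents

variable {l : Type*} [Field l] {ρ : Type*} [CommGroup ρ] [Fintype ρ]

theorem charFourier_avgIdem_of_le_ker (hρ : (Nat.card ρ : l) ≠ 0) {H : Subgroup ρ}
    {χ : ρ →* lˣ} (hle : H ≤ χ.ker) : charFourier l ρ (avgIdem l H) χ = 1 := by
  have hH : (Nat.card H : l) ≠ 0 := by
    obtain ⟨k, hk⟩ := H.card_subgroup_dvd_card
    rw [hk, Nat.cast_mul] at hρ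
    exact left_ne_zero_of_mul hρ
  have hχ : ∀ h : H, χ h = 1 := fun h => hle h.2
  rw [avgIdem, ← coe_charFourierAlgHom, map_smul, map_sum]
  simp [charFourierAlgHom, hχ, ← Nat.card_eq_fintype_card, hH]

theorem charFourier_avgIdem_of_not_le_ker {H : Subgroup ρ} {χ : ρ →* lˣ} (hle : ¬ H ≤ χ.ker) :
    charFourier l ρ (avgIdem l H) χ = 0 := by
  let : Fintype H := Fintype.ofFinite H
  have hsum : ∑ h : H, (χ h : l) = 0 :=
    sum_hom_units_eq_zero ((Units.coeHom l).comp (χ.comp H.subtype)) fun h =>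
      hle fun x hx => Units.ext (by simpa using DFunLike.congr_fun h ⟨x, hx⟩)
  rw [avgIdem, ← coe_charFourierAlgHom, map_smul, map_sum]
  simp [charFourierAlgHom, hsum]

theorem charFourier_one_sub (a : MonoidAlgebra l ρ) (χ : ρ →* lˣ) :
    charFourier l ρ (1 - a) χ = 1 - charFourier l ρ a χ := by
  simp [← coe_charFourierAlgHom]

theorem charFourier_primIdem (hρ : (Nat.card ρ : l) ≠ 0) {t : ρ}
    (ht : ∀ g : ρ, g ∈ Subgroup.zpowers t) :
    charFourier l ρ (primIdem l (Nat.card ρ) t) =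
      ({χ : ρ →* lˣ | Function.Injective χ}.indicator 1 : (ρ →* lˣ) → l) := by
  ext χ
  rw [primIdem, ← coe_charFourierAlgHom, map_prod, Finset.prod_apply, coe_charFourierAlgHom]
  simp_rw [charFourier_one_sub]
  by_cases hχ : Function.Injective χ
  · rw [Set.indicator_of_mem hχ, Pi.one_apply]
    refine Finset.prod_eq_one fun p hp => ?_
    have hnle : ¬ Subgroup.zpowers (t ^ (Nat.card ρ / p)) ≤ χ.ker := by
      rw [(MonoidHom.ker_eq_bot_iff χ).mpr hχ, le_bot_iff]
      exact zpowers_pow_card_div_ne_bot ht hp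
    rw [charFourier_avgIdem_of_not_le_ker hnle, sub_zero]
  · rw [Set.indicator_of_notMem hχ]
    obtain ⟨p, hp, hle⟩ :=
      exists_zpowers_pow_card_div_le_of_ne_bot ht (mt (MonoidHom.ker_eq_bot_iff χ).mp hχ)
    exact Finset.prod_eq_zero hp (by rw [charFourier_avgIdem_of_le_ker hρ hle, sub_self])

end Idempotents

theorem fourier_primIdem_eq_indicator_of_injective_characters_general
    (l : Type*) [Field l] (ρ : Type*) [CommGroup ρ] [Fintype ρ]
    (m : ℕ) (hcard : Fintype.card ρ = m)
    (hζ : ∃ ζ : l, IsPrimitiveRoot ζ m)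
    (t : ρ) (ht : ∀ g : ρ, g ∈ Subgroup.zpowers t) :
    (∀ χ : ρ →* lˣ,
      (Function.Injective χ → charFourier l ρ (primIdem l m t) χ = 1) ∧
      (¬ Function.Injective χ → charFourier l ρ (primIdem l m t) χ = 0)) ∧
    Set.BijOn (charFourier l ρ)
      {x : MonoidAlgebra l ρ | primIdem l m t * x = x}
      {f : (ρ →* lˣ) → l | ∀ χ : ρ →* lˣ, ¬ Function.Injective χ → f χ = 0} := by
  obtain rfl : Nat.card ρ = m := Nat.card_eq_fintype_card.trans hcard
  obtain ⟨ζ, hζ⟩ := hζ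
  have : IsCyclic ρ := ⟨t, ht⟩
  have : HasEnoughRootsOfUnity l (Monoid.exponent ρ) :=
    IsCyclic.exponent_eq_card (α := ρ) ▸ hζ.hasEnoughRootsOfUnity
  have hF := charFourier_primIdem hζ.neZero'.out ht
  refine ⟨fun χ => ⟨fun hχ => ?_, fun hχ => ?_⟩, ?_⟩
  · rw [hF, Set.indicator_of_mem hχ, Pi.one_apply]
  · rw [hF, Set.indicator_of_notMem hχ]
  have hbij : Set.BijOn (charFourier l ρ) {x | primIdem l (Nat.card ρ) t * x = x}
      {f | charFourier l ρ (primIdem l (Nat.card ρ) t) * f = f} := by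
    rw [← coe_charFourierAlgEquiv]
    exact (charFourierAlgEquiv l ρ).toMulEquiv.bijOn_setOf_mul_eq_self _
  rw [hF] at hbij
  simp only [Set.indicator_one_mul_eq_self_iff] at hbij
  exact hbij

/-- The Fourier transform of the primitive idempotent `e_prim ∈ l[ρ]` is the indicator
function of the injective characters; consequently `F` maps the primitive part
`e_prim·l[ρ]` bijectively onto the set of functions `ρ^∨ → l` vanishing on every
non-injective character. -/
theorem fourier_primIdem_eq_indicator_of_injective_characters
    (l : Type*) [Field l] (ρ : Type*) [CommGroup ρ] [Fintype ρ]
    (m : ℕ) (hm : 0 < m) (hcard : Fintype.card ρ = m)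
    (hζ : ∃ ζ : l, IsPrimitiveRoot ζ m)
    (t : ρ) (ht : ∀ g : ρ, g ∈ Subgroup.zpowers t) :
    (∀ χ : ρ →* lˣ,
      (Function.Injective χ → charFourier l ρ (primIdem l m t) χ = 1) ∧
      (¬ Function.Injective χ → charFourier l ρ (primIdem l m t) χ = 0)) ∧
    Set.BijOn (charFourier l ρ)
      {x : MonoidAlgebra l ρ | primIdem l m t * x = x}
      {f : (ρ →* lˣ) → l | ∀ χ : ρ →* lˣ, ¬ Function.Injective χ → f χ = 0} :=
  fourier_primIdem_eq_indicator_of_injective_characters_general l ρ m hcard hζ t ht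
end
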